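/- For iterated integrals of a smooth path X in V, the product of two iterated integrals over the simplex with word indices i and j equals the sum over all shuffles k of i and j of the iterated integral with word index k: (∫_{s<u_1<...<u_m<t} dX^{i_1}...dX^{i_m})(∫_{s<v_1<...<v_n<t} dX^{j_1}...dX^{j_n}) = Σ_{k ∈ Sh(i,j)} ∫_{s<r_1<...<r_{m+n}<t} dX^{k_1}...dX^{k_{m+n}}. -/
import Mathlib


/-- Multiset of all shuffles (interleavings) of two lists. -/
def shuffles {α : Type*} : List α → List α → Multiset (List α)
  | [], bs => {bs}
  | a :: as, [] => {a :: as}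
  | a :: as, b :: bs =>
      (shuffles as (b :: bs)).map (a :: ·) + (shuffles (a :: as) bs).map (b :: ·)
termination_by as bs => as.length + bs.length

/-- Iterated integral over the simplex, indexed by the *reversed* word: the
head of the list is the outermost (last) integration variable. -/
noncomputable def IIrev {d : ℕ} (X : ℝ → Fin d → ℝ) : List (Fin d) → ℝ → ℝ → ℝ
  | [], _, _ => 1
  | k :: w, s, t => ∫ u in s..t, IIrev X w s u * deriv (fun r => X r k) u

/-- The iterated integral `∫_{s<r₁<⋯<r_N<t} dX^{k₁}_{r₁} ⋯ dX^{k_N}_{r_N}`. -/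
noncomputable def II {d : ℕ} (X : ℝ → Fin d → ℝ) (w : List (Fin d)) (s t : ℝ) : ℝ :=
  IIrev X w.reverse s t



lemma shuffles_nil_right {α : Type*} (w : List α) : shuffles w [] = {w} := by
  cases w <;> simp [shuffles]

lemma shuffles_snoc {α : Type*} : ∀ (u v : List α) (a b : α),
    shuffles (u ++ [a]) (v ++ [b]) =
      (shuffles u (v ++ [b])).map (· ++ [a]) + (shuffles (u ++ [a]) v).map (· ++ [b])
  | [], [], a, b => by
      simp [shuffles, add_comm]
  | [], c :: v, a, b => by
      have ih := shuffles_snoc [] v a b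
      simp only [List.nil_append, List.cons_append] at *
      simp [shuffles, ih, Multiset.map_map, Function.comp]
      exact Multiset.cons_swap _ _ _
  | c :: u, [], a, b => by
      have ih := shuffles_snoc u [] a b
      simp only [List.nil_append, List.cons_append] at *
      simp [shuffles, ih, shuffles_nil_right, Multiset.map_map, Function.comp]
      abel
  | c :: u, dd :: v, a, b => by
      have ih1 := shuffles_snoc u (dd :: v) a b
      have ih2 := shuffles_snoc (c :: u) v a b
      simp only [List.cons_append] at *
      simp [shuffles, ih1, ih2, Multiset.map_map, Function.comp, Multiset.map_add]
      abel
termination_by u v => u.length + v.length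

lemma shuffles_reverse {α : Type*} : ∀ (u v : List α),
    (shuffles u v).map List.reverse = shuffles u.reverse v.reverse
  | [], v => by simp [shuffles]
  | a :: u, [] => by simp [shuffles, shuffles_nil_right]
  | a :: u, b :: v => by
      have ih1 := shuffles_reverse u (b :: v)
      have ih2 := shuffles_reverse (a :: u) v
      simp only [List.reverse_cons] at *
      rw [shuffles_snoc, ← ih1, ← ih2]
      simp [shuffles, Multiset.map_map, Function.comp]
termination_by u v => u.length + v.length

/-! Analytic lemmas. -/

lemma D_cont {d : ℕ} (X : ℝ → Fin d → ℝ) (hX : ContDiff ℝ 1 fun r => X r) (k : Fin d) :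
    Continuous (deriv fun r => X r k) :=
  ((contDiff_pi.mp hX) k).continuous_deriv le_rfl

lemma IIrev_cont {d : ℕ} (X : ℝ → Fin d → ℝ) (hX : ContDiff ℝ 1 fun r => X r) (s : ℝ) :
    ∀ w : List (Fin d), Continuous fun t => IIrev X w s t
  | [] => by simpa [IIrev] using continuous_const
  | k :: w => by
      have hg : Continuous fun u => IIrev X w s u * deriv (fun r => X r k) u :=
        (IIrev_cont X hX s w).mul (D_cont X hX k)
      simpa [IIrev] using
        intervalIntegral.continuous_primitive (fun a b => hg.intervalIntegrable a b) s

lemma IIrev_hasDerivAt {d : ℕ} (X : ℝ → Fin d → ℝ) (hX : ContDiff ℝ 1 fun r => X r)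
    (s : ℝ) (w : List (Fin d)) (k : Fin d) (t : ℝ) :
    HasDerivAt (fun t => IIrev X (k :: w) s t)
      (IIrev X w s t * deriv (fun r => X r k) t) t := by
  have hg : Continuous fun u => IIrev X w s u * deriv (fun r => X r k) u :=
    (IIrev_cont X hX s w).mul (D_cont X hX k)
  simpa [IIrev] using (hg.integral_hasStrictDerivAt s t).hasDerivAt

lemma hasDerivAt_multiset_sum {ι : Type*} (m : Multiset ι) (f : ι → ℝ → ℝ) (f' : ι → ℝ)
    (t : ℝ) (h : ∀ i ∈ m, HasDerivAt (f i) (f' i) t) :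
    HasDerivAt (fun t => (m.map fun i => f i t).sum) ((m.map f').sum) t := by
  induction m using Multiset.induction with
  | empty => simpa using hasDerivAt_const t (0 : ℝ)
  | cons a m ih =>
      simp only [Multiset.map_cons, Multiset.sum_cons]
      exact (h a (Multiset.mem_cons_self a m)).add
        (ih fun i hi => h i (Multiset.mem_cons_of_mem hi))

lemma IIrev_self {d : ℕ} (X : ℝ → Fin d → ℝ) (k : Fin d) (w : List (Fin d)) (s : ℝ) :
    IIrev X (k :: w) s s = 0 := by simp [IIrev]

theorem IIrev_shuffle {d : ℕ} (X : ℝ → Fin d → ℝ) (hX : ContDiff ℝ 1 fun r => X r) (s : ℝ) :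
    ∀ (a b : List (Fin d)) (t : ℝ),
      IIrev X a s t * IIrev X b s t = ((shuffles a b).map fun k => IIrev X k s t).sum
  | [], b, t => by simp [shuffles, IIrev]
  | a :: as, [], t => by simp [shuffles_nil_right, IIrev]
  | a :: as, b :: bs, t => by
    have e : ∀ u : ℝ, ((shuffles (a :: as) (b :: bs)).map fun k => IIrev X k s u).sum
        = ((shuffles as (b :: bs)).map fun k => IIrev X (a :: k) s u).sum
          + ((shuffles (a :: as) bs).map fun k => IIrev X (b :: k) s u).sum := by
      intro u
      rw [show shuffles (a :: as) (b :: bs) =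
          (shuffles as (b :: bs)).map (a :: ·) + (shuffles (a :: as) bs).map (b :: ·) from
          by rw [shuffles]]
      simp [Multiset.map_map, Function.comp]
    set F : ℝ → ℝ := fun u => IIrev X (a :: as) s u * IIrev X (b :: bs) s u -
        ((shuffles (a :: as) (b :: bs)).map fun k => IIrev X k s u).sum with hF
    have hderiv : ∀ u, HasDerivAt F 0 u := by
      intro u
      have h1 := (IIrev_hasDerivAt X hX s as a u).mul (IIrev_hasDerivAt X hX s bs b u)
      have hA := hasDerivAt_multiset_sum (shuffles as (b :: bs))
          (fun k t => IIrev X (a :: k) s t)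
          (fun k => IIrev X k s u * deriv (fun r => X r a) u) u
          (fun k _ => IIrev_hasDerivAt X hX s k a u)
      have hB := hasDerivAt_multiset_sum (shuffles (a :: as) bs)
          (fun k t => IIrev X (b :: k) s t)
          (fun k => IIrev X k s u * deriv (fun r => X r b) u) u
          (fun k _ => IIrev_hasDerivAt X hX s k b u)
      have h2 : HasDerivAt (fun t => ((shuffles (a :: as) (b :: bs)).map
            fun k => IIrev X k s t).sum)
          ((IIrev X as s u * IIrev X (b :: bs) s u) * deriv (fun r => X r a) u
            + (IIrev X (a :: as) s u * IIrev X bs s u) * deriv (fun r => X r b) u) u := by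
        simp only [e]
        have h := hA.add hB
        rwa [Multiset.sum_map_mul_right, Multiset.sum_map_mul_right,
          ← IIrev_shuffle X hX s as (b :: bs) u, ← IIrev_shuffle X hX s (a :: as) bs u] at h
      have h3 := h1.sub h2
      have : IIrev X as s u * deriv (fun r => X r a) u * IIrev X (b :: bs) s u +
            IIrev X (a :: as) s u * (IIrev X bs s u * deriv (fun r => X r b) u) -
            (IIrev X as s u * IIrev X (b :: bs) s u * deriv (fun r => X r a) u +
              IIrev X (a :: as) s u * IIrev X bs s u * deriv (fun r => X r b) u) = 0 := by ring
      rw [this] at h3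
      exact h3
    have hs0 : F s = 0 := by
      simp only [hF, e s, IIrev_self]
      simp [Multiset.map_const', Multiset.sum_replicate]
    have hconst : F t = F s :=
      is_const_of_deriv_eq_zero (fun x => (hderiv x).differentiableAt)
        (fun x => (hderiv x).deriv) t s
    have : F t = 0 := hconst.trans hs0
    have := sub_eq_zero.mp this
    exact this
termination_by a b _ => a.length + b.length


/-- For a C¹ path X in ℝ^d, the product of two iterated
integrals indexed by words i and j equals the sum over all shuffles k of i
and j of the corresponding iterated integrals. -/
theorem iteratedIntegral_shuffle_product {d : ℕ} (X : ℝ → Fin d → ℝ)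
    (hX : ContDiff ℝ 1 fun r => X r)
    (i j : List (Fin d)) (s t : ℝ) (hst : s ≤ t) :
    II X i s t * II X j s t = ((shuffles i j).map fun k => II X k s t).sum := by
  simp only [II]
  rw [IIrev_shuffle X hX s i.reverse j.reverse t, ← shuffles_reverse, Multiset.map_map]
  rfl
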